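/- Let R be a local ring. Then M₂(R) is strongly π-regular if and only if every matrix in M₂(J(R)) is nilpotent and for all u ∈ U(R), w ∈ J(R) the polynomial t² - ut - w has a left root in U(R) and a left root in J(R). -/

import Mathlib

/-!
Over a local ring `R`, a case analysis on which entries are units shows that every `2 × 2` matrix
has all its entries in `J(R)`, is invertible, or is conjugate to a companion matrix
`!![0, w; 1, u]`. Applied to idempotents, it shows that an idempotent other than `0` and `1` is
conjugate to `diag(1, 0)`, so by Fitting's lemma a strongly π-regular matrix that is neither
nilpotent nor invertible is conjugate to `diag(α, δ)` with `α` a unit and `δ` nilpotent.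
Conjugating a companion matrix to a diagonal one amounts to finding a basis of left eigenvectors,
and these correspond to left roots of `t² - u t - w`. For `u ∈ U(R)` and `w ∈ J(R)` the companion
matrix is neither nilpotent nor invertible, which yields a root in `U(R)` and one in `J(R)`;
conversely two such roots diagonalize it. Finally, a strongly π-regular `A` with entries in `J(R)`
is nilpotent: `A ^ n = A ^ n * (A * X)`, and `1 - A * X` is invertible.
-/

/-- An element of a ring is strongly π-regular if both chains `aS ⊇ a²S ⊇ ⋯` and
`Sa ⊇ Sa² ⊇ ⋯` terminate. -/
def IsStronglyPiRegular {S : Type*} [Ring S] (a : S) : Prop :=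
  (∃ (n : ℕ) (x : S), a ^ n = a ^ (n + 1) * x) ∧
  (∃ (n : ℕ) (x : S), a ^ n = x * a ^ (n + 1))

section Monoid

variable {M : Type*} [Monoid M] {a x : M} {n : ℕ}

theorem pow_eq_pow_succ_mul_of_le (h : a ^ n = a ^ (n + 1) * x) {m : ℕ} (hm : n ≤ m) :
    a ^ m = a ^ (m + 1) * x := by
  obtain ⟨k, rfl⟩ := Nat.exists_eq_add_of_le' hm
  rw [pow_add, h, ← mul_assoc, ← pow_add, ← add_assoc]

theorem pow_eq_mul_pow_succ_of_le (h : a ^ n = x * a ^ (n + 1)) {m : ℕ} (hm : n ≤ m) :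
    a ^ m = x * a ^ (m + 1) := by
  obtain ⟨k, rfl⟩ := Nat.exists_eq_add_of_le hm
  rw [pow_add, h, mul_assoc, ← pow_add, add_right_comm]

theorem pow_eq_pow_add_mul_pow (h : a ^ n = a ^ (n + 1) * x) (k : ℕ) :
    a ^ n = a ^ (n + k) * x ^ k := by
  induction k with
  | zero => simp
  | succ k ih =>
    rw [ih, pow_eq_pow_succ_mul_of_le h (Nat.le_add_right n k), pow_succ' x, mul_assoc,
      add_assoc]

end Monoid

namespace IsStronglyPiRegular

variable {S : Type*} [Ring S] {a : S}

theorem _root_.IsUnit.isStronglyPiRegular (h : IsUnit a) : IsStronglyPiRegular a := by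
  obtain ⟨b, hab, hba⟩ := isUnit_iff_exists.mp h
  exact ⟨⟨0, b, by simp [hab]⟩, ⟨0, b, by simp [hba]⟩⟩

theorem _root_.IsNilpotent.isStronglyPiRegular (h : IsNilpotent a) : IsStronglyPiRegular a := by
  obtain ⟨n, hn⟩ := h
  exact ⟨⟨n, 0, by simp [hn]⟩, ⟨n, 0, by simp [hn]⟩⟩

theorem map {T F : Type*} [Ring T] [FunLike F S T] [MonoidHomClass F S T] (f : F)
    (h : IsStronglyPiRegular a) : IsStronglyPiRegular (f a) := by
  obtain ⟨⟨n, x, hx⟩, ⟨m, y, hy⟩⟩ := h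
  exact ⟨⟨n, f x, by rw [← map_pow, ← map_pow, ← map_mul, ← hx]⟩,
    ⟨m, f y, by rw [← map_pow, ← map_pow, ← map_mul, ← hy]⟩⟩

theorem pi {ι : Type*} [Fintype ι] {S : ι → Type*} [∀ i, Ring (S i)] {a : ∀ i, S i}
    (h : ∀ i, IsStronglyPiRegular (a i)) : IsStronglyPiRegular a := by
  choose n x hx using fun i => (h i).1
  choose m y hy using fun i => (h i).2
  let N := Finset.univ.sup (n + m)
  have hN (i : ι) : n i + m i ≤ N := Finset.le_sup (f := n + m) (Finset.mem_univ i)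
  refine ⟨⟨N, x, funext fun i => ?_⟩, ⟨N, y, funext fun i => ?_⟩⟩
  · simpa using pow_eq_pow_succ_mul_of_le (hx i) (by grind)
  · simpa using pow_eq_mul_pow_succ_of_le (hy i) (by grind)

/-- `c` is the Drazin inverse of `a`. -/
theorem exists_drazin_inverse (h : IsStronglyPiRegular a) :
    ∃ (n : ℕ) (c : S), Commute a c ∧ c * a * c = c ∧ a ^ (n + 1) * c = a ^ n := by
  obtain ⟨⟨n₁, x, hx⟩, ⟨n₂, y, hy⟩⟩ := h
  set n := n₁ + n₂
  have hx : a ^ n = a ^ (n + 1) * x := pow_eq_pow_succ_mul_of_le hx (Nat.le_add_right _ _)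
  have hy : a ^ n = y * a ^ (n + 1) := pow_eq_mul_pow_succ_of_le hy (Nat.le_add_left _ _)
  have hsemi : SemiconjBy (a ^ n) x y := by
    rw [SemiconjBy]
    nth_rewrite 1 [hy]
    rw [mul_assoc, ← hx]
  set c := a ^ n * x ^ (n + 1) with hc
  have hc' : c = y ^ (n + 1) * a ^ n := (hsemi.pow_right (n + 1)).eq
  have hac : a * c = a ^ n * x ^ n :=
    calc a * c = a ^ (n + 1) * x * x ^ n := by
          rw [hc, pow_succ' a n, pow_succ' x n]; simp only [mul_assoc]
      _ = a ^ n * x ^ n := by rw [← hx]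
  have hca : c * a = y ^ n * a ^ n :=
    calc c * a = y ^ n * (y * a ^ (n + 1)) := by
          rw [hc', pow_succ y n, pow_succ a n]; simp only [mul_assoc]
      _ = y ^ n * a ^ n := by rw [← hy]
  refine ⟨n, c, ?_, ?_, ?_⟩
  · rw [Commute, SemiconjBy, hac, hca, (hsemi.pow_right n).eq]
  · calc c * a * c = y ^ (n + 1) * (a ^ n * a ^ n) * x ^ n := by
          rw [mul_assoc, hac, hc']; simp only [mul_assoc]
      _ = c := by rw [← pow_add, mul_assoc, ← pow_eq_pow_add_mul_pow hx, hc']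
  · rw [hc, ← mul_assoc, ← pow_add, add_comm, ← pow_eq_pow_add_mul_pow hx]

/-- Fitting decomposition: `a` acts invertibly on the corner cut out by `e` and nilpotently on
the complementary one. -/
theorem exists_fitting (h : IsStronglyPiRegular a) :
    ∃ (n : ℕ) (e : S), IsIdempotentElem e ∧ Commute a e ∧ a ^ n * (1 - e) = 0 ∧
      IsUnit (a * e + (1 - e)) := by
  obtain ⟨n, c, hcomm, hcac, hpow⟩ := h.exists_drazin_inverse
  have hee : a * c * (a * c) = a * c := by rw [mul_assoc, ← mul_assoc c, hcac]
  have hec : a * c * c = c := by rw [hcomm.eq, hcac]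
  have hce : c * (a * c) = c := by rw [← mul_assoc, hcac]
  have hea : a * c * a = a * (a * c) := by rw [mul_assoc, ← hcomm.eq]
  refine ⟨n, a * c, hee, (Commute.refl a).mul_right hcomm, ?_, ?_⟩
  · rw [mul_sub, mul_one, ← mul_assoc, ← pow_succ, hpow, sub_self]
  refine isUnit_iff_exists.mpr ⟨c + (1 - a * c), ?_, ?_⟩
  · calc (a * (a * c) + (1 - a * c)) * (c + (1 - a * c))
        = a * (a * c * c) + a * (a * c) - a * (a * c * (a * c)) + c - a * c * c + 1
          - a * c - a * c + a * c * (a * c) := by noncomm_ring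
      _ = 1 := by rw [hec, hee]; noncomm_ring
  · have hcae : c * (a * (a * c)) = a * c := by rw [← mul_assoc, ← hcomm.eq, hee]
    have heae : a * c * (a * (a * c)) = a * (a * c) := by rw [← mul_assoc, hea, mul_assoc, hee]
    calc (c + (1 - a * c)) * (a * (a * c) + (1 - a * c))
        = c * (a * (a * c)) + c - c * (a * c) + a * (a * c) - a * c * (a * (a * c)) + 1
          - a * c - a * c + a * c * (a * c) := by noncomm_ring
      _ = 1 := by rw [hcae, hce, heae, hee]; noncomm_ring

theorem isNilpotent_of_forall_isUnit_one_sub_mul (h : IsStronglyPiRegular a)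
    (ha : ∀ x, IsUnit (1 - a * x)) : IsNilpotent a := by
  obtain ⟨⟨n, x, hx⟩, -⟩ := h
  refine ⟨n, (ha x).mul_left_eq_zero.mp ?_⟩
  rw [mul_sub, mul_one, ← mul_assoc, ← pow_succ, ← hx, sub_self]

theorem _root_.IsConj.exists_ringEquiv {b : S} (h : IsConj a b) :
    ∃ f : S ≃+* S, f a = b ∧ ∀ x, IsConj x (f x) := by
  obtain ⟨c, hc⟩ := h
  refine ⟨MulSemiringAction.toRingEquiv _ S (ConjAct.toConjAct c), ?_, fun x => ⟨c, ?_⟩⟩ <;>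
    simp [ConjAct.units_smul_def, SemiconjBy, hc.eq, mul_assoc]

theorem of_isConj {b : S} (h : IsConj a b) (ha : IsStronglyPiRegular a) :
    IsStronglyPiRegular b := by
  obtain ⟨f, rfl, -⟩ := h.exists_ringEquiv
  exact ha.map f

end IsStronglyPiRegular

instance IsLocalRing.toIsDedekindFiniteMonoid {R : Type*} [Ring R] [IsLocalRing R] :
    IsDedekindFiniteMonoid R where
  mul_eq_one_symm {a b} hab := by
    have hidem : IsIdempotentElem (b * a) := by
      rw [IsIdempotentElem, mul_assoc, ← mul_assoc a, hab, one_mul]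
    rcases IsLocalRing.isUnit_or_isUnit_of_add_one (add_sub_cancel (b * a) 1) with h | h
    · exact (IsIdempotentElem.iff_eq_one_of_isUnit h).mp hidem
    · have hb : b = 0 := h.mul_right_eq_zero.mp <| by
        rw [sub_mul, one_mul, mul_assoc, hab, mul_one, sub_self]
      simp [hb] at hab

namespace IsLocalRing

variable {R : Type*} [Ring R] [IsLocalRing R] {a b : R}

theorem isUnit_add_of_not_isUnit (ha : IsUnit a) (hb : ¬IsUnit b) : IsUnit (a + b) := by
  by_contra hab
  exact nonunits_add hab (show -b ∈ nonunits R by simpa using hb) (by simpa using ha)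

theorem isUnit_sub_of_not_isUnit (ha : IsUnit a) (hb : ¬IsUnit b) : IsUnit (a - b) := by
  simpa [sub_eq_add_neg] using isUnit_add_of_not_isUnit ha (by simpa using hb)

end IsLocalRing

namespace Matrix

section Ring

variable {S : Type*} [Ring S]

theorem isUnit_fin_two_of_isUnit_schur (a : Sˣ) {b c d : S} (hs : IsUnit (d - c * ↑a⁻¹ * b)) :
    IsUnit !![(a : S), b; c, d] := by
  have hL : IsUnit !![(1 : S), 0; c * ↑a⁻¹, 1] :=
    isUnit_iff_exists.mpr ⟨!![1, 0; -(c * ↑a⁻¹), 1], by simp [one_fin_two], by simp [one_fin_two]⟩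
  have hD : IsUnit !![(a : S), 0; 0, d - c * ↑a⁻¹ * b] := by
    have hv : IsUnit ![(a : S), d - c * ↑a⁻¹ * b] :=
      Pi.isUnit_iff.mpr (Fin.forall_fin_two.mpr ⟨a.isUnit, hs⟩)
    simpa [diagonal_fin_two] using hv.map (diagonalRingHom (Fin 2) S)
  have hU : IsUnit !![(1 : S), ↑a⁻¹ * b; 0, 1] :=
    isUnit_iff_exists.mpr ⟨!![1, -(↑a⁻¹ * b); 0, 1], by simp [one_fin_two], by simp [one_fin_two]⟩
  convert (hL.mul hD).mul hU using 1
  simp [mul_assoc]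

theorem isConj_fin_two_swap (a b c d : S) : IsConj !![a, b; c, d] !![d, c; b, a] := by
  have hσ : !![(0 : S), 1; 1, 0] * !![0, 1; 1, 0] = 1 := by simp [one_fin_two]
  exact ⟨⟨_, _, hσ, hσ⟩, by simp [SemiconjBy]⟩

theorem isConj_fin_two_lower (a b c d : S) :
    IsConj !![a, b; c, d] !![a - b, b; a + c - b - d, b + d] := by
  refine ⟨⟨!![1, 0; 1, 1], !![1, 0; -1, 1], by simp [one_fin_two], by simp [one_fin_two]⟩, ?_⟩
  simp [SemiconjBy]

theorem eq_diagonal_of_commute_diagonal_one_zero {M : Matrix (Fin 2) (Fin 2) S}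
    (h : Commute M (diagonal ![1, 0])) : M = diagonal ![M 0 0, M 1 1] := by
  obtain ⟨a, b, c, d, rfl⟩ : ∃ a b c d, M = !![a, b; c, d] := ⟨_, _, _, _, eta_fin_two M⟩
  obtain ⟨rfl, rfl⟩ : 0 = b ∧ c = 0 := by simpa [diagonal_fin_two] using h.eq
  simp [diagonal_fin_two]

/-- The companion matrix of `t² - u t - w` for left roots: `λ` is a left root exactly when the
row `(1, λ)` is a left eigenvector of `companion u w` with eigenvalue `λ`. -/
def companion (u w : S) : Matrix (Fin 2) (Fin 2) S := !![0, w; 1, u]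

theorem isConj_companion_of_isIdempotentElem {u w : S}
    (h : IsIdempotentElem (companion u w)) : IsConj (companion u w) (diagonal ![1, 0]) := by
  obtain ⟨⟨rfl, -⟩, rfl, -⟩ : (w = 0 ∧ w * u = w) ∧ u = 1 ∧ w + u * u = u := by
    simpa [companion] using h.eq
  refine ⟨⟨!![1, 1; 1, 0], !![0, 1; 1, -1], by simp [one_fin_two], by simp [one_fin_two]⟩, ?_⟩
  simp [SemiconjBy, companion, diagonal_fin_two]

theorem isUnit_companion {u w : S} (hw : IsUnit w) : IsUnit (companion u w) := by
  lift w to Sˣ using hw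
  exact isUnit_iff_exists.mpr ⟨!![-(u * ↑w⁻¹), 1; ↑w⁻¹, 0], by simp [companion, one_fin_two],
    by simp [companion, one_fin_two]⟩

theorem isConj_companion_diagonal {u w l₁ l₂ : S} (h₁ : l₁ ^ 2 - l₁ * u - w = 0)
    (h₂ : l₂ ^ 2 - l₂ * u - w = 0) (h : IsUnit (l₂ - l₁)) :
    IsConj (companion u w) (diagonal ![l₁, l₂]) := by
  rw [sub_sub, sub_eq_zero, sq] at h₁ h₂
  have hQ : IsUnit !![1, l₁; 1, l₂] := isUnit_fin_two_of_isUnit_schur 1 (by simpa using h)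
  refine ⟨hQ.unit, ?_⟩
  simp [SemiconjBy, companion, diagonal_fin_two, h₁, h₂, add_comm]

theorem exists_isConj_companion {a b c d : S} (hc : IsUnit c) :
    ∃ u w, IsConj !![a, b; c, d] (companion u w) := by
  lift c to Sˣ using hc
  have hP : IsUnit !![1, a; 0, (c : S)] := isUnit_fin_two_of_isUnit_schur 1 (by simp)
  refine ⟨a + ↑c⁻¹ * d * c, b * c - a * ↑c⁻¹ * d * c, IsConj.symm ⟨hP.unit, ?_⟩⟩
  have hw : b * c - a * ↑c⁻¹ * d * c + a * (a + ↑c⁻¹ * d * c) = a * a + b * c := by noncomm_ring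
  have hu : ↑c * (a + ↑c⁻¹ * d * c) = c * a + d * c := by simp [mul_add, ← mul_assoc]
  simpa [SemiconjBy, companion] using ⟨hw, hu⟩

end Ring

section IsLocalRing

variable {R : Type*} [Ring R] [IsLocalRing R]

open IsLocalRing

theorem not_isUnit_mul_apply {n : Type*} [Fintype n] {K : Matrix n n R}
    (hK : ∀ i j, ¬IsUnit (K i j)) (B : Matrix n n R) (i j : n) : ¬IsUnit ((K * B) i j) := by
  rw [mul_apply]
  exact (nonunitsAddSubmonoid R).sum_mem fun k _ h => hK i k (isUnit_of_mul_isUnit_left h)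

theorem exists_isUnit_apply_of_isUnit {n : Type*} [Fintype n] [DecidableEq n]
    {M : Matrix n n R} (hM : IsUnit M) (i : n) : ∃ j, IsUnit (M i j) := by
  obtain ⟨N, hMN⟩ := hM.exists_right_inv
  have hsum : IsUnit (∑ j, M i j * N j i) := by
    rw [← mul_apply, hMN, one_apply_eq]
    exact isUnit_one
  obtain ⟨j, -, hj⟩ := exists_of_isUnit_sum hsum
  exact ⟨j, isUnit_of_mul_isUnit_left hj⟩

theorem isUnit_fin_two_of_isUnit_diag {a b c d : R} (ha : IsUnit a) (hd : IsUnit d)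
    (hb : ¬IsUnit b) : IsUnit !![a, b; c, d] := by
  lift a to Rˣ using ha
  refine isUnit_fin_two_of_isUnit_schur a (isUnit_sub_of_not_isUnit hd fun h => hb ?_)
  exact isUnit_of_mul_isUnit_right h

theorem isUnit_one_sub_of_not_isUnit_apply {K : Matrix (Fin 2) (Fin 2) R}
    (hK : ∀ i j, ¬IsUnit (K i j)) : IsUnit (1 - K) := by
  rw [eta_fin_two (1 - K)]
  refine isUnit_fin_two_of_isUnit_diag ?_ ?_ ?_ <;>
    simp [isUnit_sub_of_not_isUnit isUnit_one, hK]

theorem forall_not_isUnit_or_isUnit_or_isConj_companion (A : Matrix (Fin 2) (Fin 2) R) :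
    (∀ i j, ¬IsUnit (A i j)) ∨ IsUnit A ∨ ∃ u w, IsConj A (companion u w) := by
  obtain ⟨a, b, c, d, rfl⟩ : ∃ a b c d, A = !![a, b; c, d] := ⟨_, _, _, _, eta_fin_two A⟩
  by_cases hc : IsUnit c
  · exact .inr <| .inr <| exists_isConj_companion hc
  by_cases hb : IsUnit b
  · obtain ⟨u, w, h⟩ := exists_isConj_companion (a := d) (d := a) hb
    exact .inr <| .inr ⟨u, w, (isConj_fin_two_swap a b c d).trans h⟩
  -- conjugating by `!![1, 0; 1, 1]` turns the lower-left entry into `(a - d) + (c - b)`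
  by_cases had : IsUnit (a - d)
  · have hcb : ¬IsUnit (c - b) := by
      rw [sub_eq_add_neg]
      exact nonunits_add hc (by simpa using hb)
    have hunit : IsUnit (a + c - b - d) := by
      convert isUnit_add_of_not_isUnit had hcb using 1
      abel
    obtain ⟨u, w, h⟩ := exists_isConj_companion (a := a - b) (b := b) (d := b + d) hunit
    exact .inr <| .inr ⟨u, w, (isConj_fin_two_lower a b c d).trans h⟩
  by_cases ha : IsUnit a
  · have hd : IsUnit d := by
      by_contra hd
      exact had (isUnit_sub_of_not_isUnit ha hd)
    exact .inr <| .inl <| isUnit_fin_two_of_isUnit_diag ha hd hb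
  · have hd : ¬IsUnit d := fun hd => had (by simpa using (isUnit_sub_of_not_isUnit hd ha).neg)
    left
    simp [Fin.forall_fin_two, *]

theorem eq_zero_or_eq_one_or_isConj_of_isIdempotentElem {e : Matrix (Fin 2) (Fin 2) R}
    (he : IsIdempotentElem e) : e = 0 ∨ e = 1 ∨ IsConj e (diagonal ![1, 0]) := by
  rcases forall_not_isUnit_or_isUnit_or_isConj_companion e with h | h | ⟨u, w, hconj⟩
  · exact .inl <| (isUnit_one_sub_of_not_isUnit_apply h).mul_left_eq_zero.mp he.mul_one_sub_self
  · exact .inr <| .inl <| (IsIdempotentElem.iff_eq_one_of_isUnit h).mp he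
  · obtain ⟨f, hf, -⟩ := hconj.exists_ringEquiv
    exact .inr <| .inr <| hconj.trans <| isConj_companion_of_isIdempotentElem (hf ▸ he.map f)

theorem isUnit_apply_of_isUnit_diagonal {n : Type*} [Fintype n] [DecidableEq n] {v : n → R}
    (h : IsUnit (diagonal v)) (i : n) : IsUnit (v i) := by
  obtain ⟨j, hj⟩ := exists_isUnit_apply_of_isUnit h i
  by_cases hij : i = j
  · simpa [hij] using hj
  · simp [diagonal_apply_ne _ hij] at hj

theorem _root_.IsStronglyPiRegular.isNilpotent_or_isUnit_or_isConj_diagonal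
    {A : Matrix (Fin 2) (Fin 2) R}
    (h : IsStronglyPiRegular A) : IsNilpotent A ∨ IsUnit A ∨
      ∃ α δ : R, IsUnit α ∧ IsNilpotent δ ∧ IsConj A (diagonal ![α, δ]) := by
  obtain ⟨n, e, he, hcomm, hnil, hunit⟩ := h.exists_fitting
  rcases eq_zero_or_eq_one_or_isConj_of_isIdempotentElem he with rfl | rfl | hconj
  · exact .inl ⟨n, by simpa using hnil⟩
  · exact .inr <| .inl <| by simpa using hunit
  obtain ⟨f, hfe, hf⟩ := hconj.exists_ringEquiv
  obtain ⟨α, δ, hdiag⟩ : ∃ α δ, f A = diagonal ![α, δ] :=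
    ⟨_, _, eq_diagonal_of_commute_diagonal_one_zero (hfe ▸ hcomm.map f)⟩
  refine .inr <| .inr ⟨α, δ, ?_, ⟨n, ?_⟩, hdiag ▸ hf A⟩
  · have := hunit.map f
    rw [map_add, map_mul, map_sub, map_one, hfe, hdiag, ← diagonal_one', diagonal_mul_diagonal',
      diagonal_sub, diagonal_add] at this
    simpa using isUnit_apply_of_isUnit_diagonal this 0
  · have := congrArg f hnil
    rw [map_mul, map_pow, map_sub, map_one, hfe, hdiag, map_zero, diagonal_pow, ← diagonal_one',
      diagonal_sub, diagonal_mul_diagonal', diagonal_eq_zero] at this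
    simpa using congrFun this 1

theorem not_isUnit_companion {u w : R} (hw : ¬IsUnit w) : ¬IsUnit (companion u w) := by
  intro h
  obtain ⟨j, hj⟩ := exists_isUnit_apply_of_isUnit h 0
  fin_cases j <;> simp_all [companion]

theorem not_isNilpotent_companion {u w : R} (hu : IsUnit u) (hw : ¬IsUnit w) :
    ¬IsNilpotent (companion u w) := by
  have hpow (k : ℕ) : IsUnit ((companion u w ^ k) 1 1) := by
    induction k with
    | zero => simp
    | succ k ih =>
      rw [pow_succ, mul_apply, Fin.sum_univ_two, add_comm]
      exact isUnit_add_of_not_isUnit (by simpa [companion] using ih.mul hu)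
        (by simpa [companion] using fun h => hw (isUnit_of_mul_isUnit_right h))
  rintro ⟨k, hk⟩
  simpa [hk] using hpow k

theorem exists_leftRoot_of_isConj_companion_diagonal {u w : R} {d : Fin 2 → R}
    (h : IsConj (companion u w) (diagonal d)) (i : Fin 2) :
    ∃ l : R, (IsUnit l ↔ IsUnit (d i)) ∧ l ^ 2 - l * u - w = 0 := by
  -- row `i` of `Q` is a left eigenvector `(q, d i * q)`, and `q⁻¹ * d i * q` is a left root
  obtain ⟨Q, hQ⟩ := h
  have hrow (j : Fin 2) : ((Q : Matrix (Fin 2) (Fin 2) R) * companion u w) i j = d i * Q i j := by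
    rw [hQ.eq, diagonal_mul]
  simp only [mul_apply, Fin.sum_univ_two, companion] at hrow
  have h₀ : Q i 1 = d i * Q i 0 := by simpa using hrow 0
  have h₁ : Q i 0 * w + Q i 1 * u = d i * Q i 1 := by simpa using hrow 1
  obtain ⟨q, hq⟩ : IsUnit (Q i 0) := by
    obtain ⟨j, hj⟩ := exists_isUnit_apply_of_isUnit Q.isUnit i
    fin_cases j
    · exact hj
    · exact isUnit_of_mul_isUnit_right (h₀ ▸ hj)
  refine ⟨↑q⁻¹ * d i * q, by simp, ?_⟩
  calc (↑q⁻¹ * d i * q) ^ 2 - ↑q⁻¹ * d i * q * u - w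
      = ↑q⁻¹ * (d i * (d i * q) - (q * w + d i * q * u)) := by
        simp only [sq, mul_assoc, mul_sub, mul_add, Units.mul_inv_cancel_left,
          Units.inv_mul_cancel_left]
        abel
    _ = 0 := by rw [hq, ← h₀, ← h₁, sub_self, mul_zero]

theorem exists_leftRoots_of_isStronglyPiRegular_companion {u w : R} (hu : IsUnit u)
    (hw : ¬IsUnit w) (h : IsStronglyPiRegular (companion u w)) :
    (∃ l : R, IsUnit l ∧ l ^ 2 - l * u - w = 0) ∧ (∃ l : R, ¬IsUnit l ∧ l ^ 2 - l * u - w = 0) := by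
  rcases h.isNilpotent_or_isUnit_or_isConj_diagonal with hC | hC | ⟨α, δ, hα, hδ, hconj⟩
  · exact absurd hC (not_isNilpotent_companion hu hw)
  · exact absurd hC (not_isUnit_companion hw)
  obtain ⟨l₁, hl₁, h₁⟩ := exists_leftRoot_of_isConj_companion_diagonal hconj 0
  obtain ⟨l₂, hl₂, h₂⟩ := exists_leftRoot_of_isConj_companion_diagonal hconj 1
  exact ⟨⟨l₁, hl₁.mpr hα, h₁⟩, ⟨l₂, fun h => hδ.not_isUnit (hl₂.mp h), h₂⟩⟩

theorem isStronglyPiRegular_companion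
    (hnil : ∀ A : Matrix (Fin 2) (Fin 2) R, (∀ i j, ¬IsUnit (A i j)) → IsNilpotent A)
    (hroots : ∀ u w : R, IsUnit u → ¬IsUnit w →
      (∃ l : R, IsUnit l ∧ l ^ 2 - l * u - w = 0) ∧ (∃ l : R, ¬IsUnit l ∧ l ^ 2 - l * u - w = 0))
    (u w : R) : IsStronglyPiRegular (companion u w) := by
  by_cases hw : IsUnit w
  · exact (isUnit_companion hw).isStronglyPiRegular
  by_cases hu : IsUnit u
  · obtain ⟨⟨l₁, hl₁, h₁⟩, ⟨l₂, hl₂, h₂⟩⟩ := hroots u w hu hw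
    have hnil₂ : IsNilpotent l₂ := by
      refine (IsNilpotent.map_iff (f := scalar (Fin 2)) fun a b => scalar_inj.mp).mp (hnil _ ?_)
      simp [diagonal_apply, apply_ite, hl₂]
    have hconj := isConj_companion_diagonal h₁ h₂ <| by
      simpa using (isUnit_sub_of_not_isUnit hl₁ hl₂).neg
    have hdiag : IsStronglyPiRegular ![l₁, l₂] :=
      .pi (Fin.forall_fin_two.mpr ⟨hl₁.isStronglyPiRegular, hnil₂.isStronglyPiRegular⟩)
    exact IsStronglyPiRegular.of_isConj hconj.symm (hdiag.map (diagonalRingHom (Fin 2) R))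
  · refine IsNilpotent.isStronglyPiRegular (IsNilpotent.of_pow (m := 2) (hnil _ ?_))
    have huu : ¬IsUnit (w + u * u) := nonunits_add hw fun h => hu (isUnit_of_mul_isUnit_left h)
    simp [companion, sq, Fin.forall_fin_two, hu, hw, huu]

end IsLocalRing

end Matrix

/-- For a local ring `R` (where `J(R)` is the set of nonunits), `M₂(R)` is strongly
π-regular iff every matrix in `M₂(J(R))` is nilpotent and for all `u ∈ U(R)`,
`w ∈ J(R)`, the polynomial `t² - ut - w` has a left root in `U(R)` and a left root in
`J(R)`. -/
theorem matrix_two_stronglyPiRegular_iff {R : Type*} [Ring R] [IsLocalRing R] :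
    (∀ A : Matrix (Fin 2) (Fin 2) R, IsStronglyPiRegular A) ↔
      ((∀ A : Matrix (Fin 2) (Fin 2) R, (∀ i j, ¬ IsUnit (A i j)) → IsNilpotent A) ∧
        ∀ u w : R, IsUnit u → ¬ IsUnit w →
          (∃ lam : R, IsUnit lam ∧ lam ^ 2 - lam * u - w = 0) ∧
          (∃ lam : R, ¬ IsUnit lam ∧ lam ^ 2 - lam * u - w = 0)) := by
  open Matrix in
  constructor
  · intro h
    refine ⟨fun A hA => (h A).isNilpotent_of_forall_isUnit_one_sub_mul fun X =>
      isUnit_one_sub_of_not_isUnit_apply (not_isUnit_mul_apply hA X), fun u w hu hw => ?_⟩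
    exact exists_leftRoots_of_isStronglyPiRegular_companion hu hw (h _)
  · rintro ⟨hnil, hroots⟩ A
    rcases forall_not_isUnit_or_isUnit_or_isConj_companion A with hA | hA | ⟨u, w, hconj⟩
    · exact (hnil A hA).isStronglyPiRegular
    · exact hA.isStronglyPiRegular
    · exact .of_isConj hconj.symm (isStronglyPiRegular_companion hnil hroots u w)
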